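/- arXiv:2605.26631 — 5 statements merged into one kernel-verified Lean document; each statement's English description precedes it below -/
import Mathlib

section
/- Let e_1, ..., e_p be nonnegative random variables and H_0 ⊆ {1,...,p} a set of 'null' indices such that the sum over j ∈ H_0 of E[e_j] is at most p. Let S ⊆ {1,...,p} be a (possibly random) selection set and q > 0 a level such that almost surely every selected index j ∈ S satisfies e_j ≥ p/(q·|S|) whenever S is nonempty (e-BH self-consistency). Then the false discovery rate E[|S ∩ H_0| / max(|S|, 1)] is at most q. -/
open MeasureTheory Finset

/-! On the event that `S` is nonempty, self-consistency `e_j ≥ p / (q |S|)` for every selected `j`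
gives, by the Markov-type bound `1{a ≥ b} ≤ a / b`, that each selected null index contributes
`1 / |S| ≤ (q / p) e_j` to the false discovery proportion. Summing over `S ∩ H₀` and enlarging to
all of `H₀` bounds the FDP pointwise by `(q / p) ∑_{j ∈ H₀} e_j`, whose expectation is at most
`(q / p) p = q`. -/

lemma inv_le_div_mul_of_div_mul_le {p q n x : ℝ} (hp : 0 < p) (hq : 0 < q) (hn : 0 < n)
    (h : p / (q * n) ≤ x) : n⁻¹ ≤ q / p * x := by
  calc n⁻¹ = q / p * (p / (q * n)) := by field_simp
    _ ≤ q / p * x := by gcongr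

section FalseDiscoveryProportion

variable {ι : Type*} [DecidableEq ι]

noncomputable def falseDiscoveryProportion (H0 S : Finset ι) : ℝ :=
  #(S ∩ H0) / max (#S : ℝ) 1

lemma falseDiscoveryProportion_nonneg (H0 S : Finset ι) :
    0 ≤ falseDiscoveryProportion H0 S := by
  unfold falseDiscoveryProportion
  positivity

lemma falseDiscoveryProportion_eq_sum_inv_card (H0 : Finset ι) {S : Finset ι}
    (hS : S.Nonempty) : falseDiscoveryProportion H0 S = ∑ _j ∈ S ∩ H0, (#S : ℝ)⁻¹ := by
  have hcard : (1 : ℝ) ≤ #S := by exact_mod_cast hS.card_pos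
  rw [falseDiscoveryProportion, max_eq_left hcard, sum_const, nsmul_eq_mul, div_eq_mul_inv]

lemma falseDiscoveryProportion_le_of_selfConsistent {H0 S : Finset ι} {e : ι → ℝ}
    {p q : ℝ} (hp : 0 < p) (hq : 0 < q) (he : ∀ j ∈ H0, 0 ≤ e j)
    (hsc : ∀ j ∈ S, p / (q * #S) ≤ e j) :
    falseDiscoveryProportion H0 S ≤ q / p * ∑ j ∈ H0, e j := by
  have hsum_nonneg : 0 ≤ q / p * ∑ j ∈ H0, e j := by
    have := sum_nonneg he
    positivity
  rcases S.eq_empty_or_nonempty with rfl | hS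
  · simpa [falseDiscoveryProportion] using hsum_nonneg
  rw [falseDiscoveryProportion_eq_sum_inv_card H0 hS, mul_sum]
  calc ∑ _j ∈ S ∩ H0, (#S : ℝ)⁻¹
      ≤ ∑ j ∈ S ∩ H0, q / p * e j := by
        refine sum_le_sum fun j hj => ?_
        exact inv_le_div_mul_of_div_mul_le hp hq (by exact_mod_cast hS.card_pos)
          (hsc j (mem_inter.mp hj).1)
    _ ≤ ∑ j ∈ H0, q / p * e j :=
        sum_le_sum_of_subset_of_nonneg inter_subset_right fun j hj _ =>
          mul_nonneg (div_nonneg hq.le hp.le) (he j hj)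

end FalseDiscoveryProportion

theorem ebh_self_consistent_fdr_control_general
    {Ω : Type*} [MeasurableSpace Ω] (μ : Measure Ω)
    (p : ℕ) (hp : 1 ≤ p)
    (e : Fin p → Ω → ℝ)
    (he_nonneg : ∀ j ω, 0 ≤ e j ω)
    (he_int : ∀ j, Integrable (e j) μ)
    (H0 : Finset (Fin p))
    (hsum : ∑ j ∈ H0, ∫ ω, e j ω ∂μ ≤ (p : ℝ))
    (S : Ω → Finset (Fin p))
    (q : ℝ) (hq : 0 < q)
    (hsc : ∀ᵐ ω ∂μ, ∀ j ∈ S ω, (p : ℝ) / (q * (S ω).card) ≤ e j ω) :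
    ∫ ω, ((S ω ∩ H0).card : ℝ) / max ((S ω).card : ℝ) 1 ∂μ ≤ q := by
  have hp_pos : (0 : ℝ) < p := by exact_mod_cast hp
  have hbound_int : Integrable (fun ω => q / p * ∑ j ∈ H0, e j ω) μ :=
    (integrable_finsetSum H0 fun j _ => he_int j).const_mul _
  change ∫ ω, falseDiscoveryProportion H0 (S ω) ∂μ ≤ q
  calc ∫ ω, falseDiscoveryProportion H0 (S ω) ∂μ
      ≤ ∫ ω, q / p * ∑ j ∈ H0, e j ω ∂μ :=
        integral_mono_of_nonneg (ae_of_all _ fun ω => falseDiscoveryProportion_nonneg H0 (S ω))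
          hbound_int (hsc.mono fun ω hω =>
            falseDiscoveryProportion_le_of_selfConsistent hp_pos hq (fun j _ => he_nonneg j ω) hω)
    _ = q / p * ∑ j ∈ H0, ∫ ω, e j ω ∂μ := by
        rw [integral_const_mul, integral_finsetSum H0 fun j _ => he_int j]
    _ ≤ q / p * p := by gcongr
    _ = q := div_mul_cancel₀ q hp_pos.ne'

/-- FDR control for any self-consistent e-BH-type selection rule:
if the e-values are nonnegative with `∑_{j ∈ H0} E[e_j] ≤ p`, and almost surely every
selected index `j ∈ S` satisfies `e_j ≥ p / (q * |S|)`, then the FDR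
`E[|S ∩ H0| / max(|S|, 1)]` is at most `q`. -/
theorem ebh_self_consistent_fdr_control
    {Ω : Type*} [MeasurableSpace Ω] (μ : Measure Ω) [IsProbabilityMeasure μ]
    (p : ℕ) (hp : 1 ≤ p)
    (e : Fin p → Ω → ℝ)
    (he_nonneg : ∀ j ω, 0 ≤ e j ω)
    (he_int : ∀ j, Integrable (e j) μ)
    (H0 : Finset (Fin p))
    (hsum : ∑ j ∈ H0, ∫ ω, e j ω ∂μ ≤ (p : ℝ))
    (S : Ω → Finset (Fin p))
    (q : ℝ) (hq : 0 < q)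
    (hsc : ∀ᵐ ω ∂μ, ∀ j ∈ S ω, (p : ℝ) / (q * (S ω).card) ≤ e j ω)
    (hFDP : Integrable (fun ω => ((S ω ∩ H0).card : ℝ) / max ((S ω).card : ℝ) 1) μ) :
    ∫ ω, ((S ω ∩ H0).card : ℝ) / max ((S ω).card : ℝ) 1 ∂μ ≤ q :=
  ebh_self_consistent_fdr_control_general μ p hp e he_nonneg he_int H0 hsum S q hq hsc
end

section
/- Let e_1, ..., e_p be nonnegative random variables with ∑_{j ∈ H_0} E[e_j] ≤ p for a null set H_0 ⊆ {1,...,p}. For fixed q ∈ (0,1] and s_max ∈ {1,...,p}, let S* be the size-constrained e-BH selection: S* consists of the ĵ* indices with largest e-values, where ĵ* is the largest j ≤ s_max with e_(j) ≥ p/(q·j) (and S* = ∅ if no such j exists). Then |S*| ≤ s_max and the FDR E[|S* ∩ H_0|/max(|S*|,1)] ≤ q. -/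
/-!
A selection `S` is self-consistent when every selected e-value is at least `p / (q |S|)`.
Then each selected null contributes at most `(q / p) e_j` to `|S ∩ H₀| / |S|`, so the false
discovery proportion is bounded pointwise by `(q / p) ∑_{j ∈ H₀} e_j`, whose expectation is at
most `q`. The size-constrained e-BH selection is self-consistent because its `ĵ*` members carry
the `ĵ*` largest e-values, all at least `e_(ĵ*) ≥ p / (q ĵ*)`.
-/

open MeasureTheory
open scoped Classical

/-- Size-constrained e-BH rejection count: the largest `j ≤ s_max` with
`E j ≥ p/(q·j)` (`0` if none exists), where `E j` is the `j`-th largest e-value. -/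
noncomputable def ebhCountCap (p smax : ℕ) (E : ℕ → ℝ) (q : ℝ) : ℕ :=
  ((Finset.Icc 1 (min smax p)).filter (fun j => (p : ℝ) / (q * j) ≤ E j)).sup id

/-- The (random) size-constrained e-BH selection: for each outcome `ω`, the indices
carrying the `ĵ*` largest e-values, where `r ω` ranks the indices by decreasing
e-value (with a fixed tie-breaking rule). -/
noncomputable def ebhSelCap {Ω : Type*} (p smax : ℕ) (e : Fin p → Ω → ℝ) (q : ℝ)
    (r : Ω → ℕ → Fin p) (ω : Ω) : Finset (Fin p) :=
  (Finset.range (ebhCountCap p smax (fun j => e (r ω (j - 1)) ω) q)).image (r ω)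

open Finset

section SelfConsistent

variable {ι : Type*}

noncomputable def fdp [DecidableEq ι] (H0 S : Finset ι) : ℝ :=
  (#(S ∩ H0) : ℝ) / max (#S : ℝ) 1

def IsSelfConsistent [Fintype ι] (q : ℝ) (e : ι → ℝ) (S : Finset ι) : Prop :=
  ∀ j ∈ S, (Fintype.card ι : ℝ) / (q * #S) ≤ e j

theorem IsSelfConsistent.fdp_le [Fintype ι] [DecidableEq ι] {q : ℝ} {e : ι → ℝ}
    {S : Finset ι} (hS : IsSelfConsistent q e S) (hq : 0 < q) (H0 : Finset ι)
    (he : ∀ j ∈ H0, 0 ≤ e j) :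
    fdp H0 S ≤ q / Fintype.card ι * ∑ j ∈ H0, e j := by
  have hbound_nonneg : 0 ≤ q / Fintype.card ι * ∑ j ∈ H0, e j :=
    mul_nonneg (by positivity) (sum_nonneg he)
  rcases S.eq_empty_or_nonempty with rfl | hne
  · simpa [fdp] using hbound_nonneg
  have hm : (0 : ℝ) < Fintype.card ι := by
    exact_mod_cast Fintype.card_pos_iff.mpr ⟨hne.choose⟩
  have hs : (1 : ℝ) ≤ #S := by exact_mod_cast hne.card_pos
  have hsel : ∀ j ∈ S, 1 / (#S : ℝ) ≤ q / Fintype.card ι * e j := by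
    intro j hj
    calc 1 / (#S : ℝ) = q / Fintype.card ι * (Fintype.card ι / (q * #S)) := by
          field_simp
      _ ≤ q / Fintype.card ι * e j := by gcongr; exact hS j hj
  calc fdp H0 S = ∑ j ∈ S ∩ H0, 1 / (#S : ℝ) := by
        rw [fdp, max_eq_left hs, sum_const, nsmul_eq_mul, mul_one_div]
    _ ≤ ∑ j ∈ S ∩ H0, q / Fintype.card ι * e j :=
        sum_le_sum fun j hj => hsel j (mem_inter.mp hj).1
    _ ≤ ∑ j ∈ H0, q / Fintype.card ι * e j :=
        sum_le_sum_of_subset_of_nonneg inter_subset_right fun j hj _ =>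
          mul_nonneg (by positivity) (he j hj)
    _ = q / Fintype.card ι * ∑ j ∈ H0, e j := (mul_sum _ _ _).symm

theorem integral_fdp_le_of_isSelfConsistent [Fintype ι] [DecidableEq ι]
    {Ω : Type*} [MeasurableSpace Ω] {μ : Measure Ω} {e : ι → Ω → ℝ} {q : ℝ}
    {S : Ω → Finset ι} {H0 : Finset ι}
    (hS : ∀ ω, IsSelfConsistent q (e · ω) (S ω)) (hq : 0 < q)
    (he_nonneg : ∀ j ω, 0 ≤ e j ω) (he_int : ∀ j, Integrable (e j) μ)
    (hsum : ∑ j ∈ H0, ∫ ω, e j ω ∂μ ≤ Fintype.card ι) :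
    ∫ ω, fdp H0 (S ω) ∂μ ≤ q := by
  have hint : Integrable (fun ω => q / Fintype.card ι * ∑ j ∈ H0, e j ω) μ :=
    (integrable_finsetSum _ fun j _ => he_int j).const_mul _
  calc ∫ ω, fdp H0 (S ω) ∂μ
      ≤ ∫ ω, q / Fintype.card ι * ∑ j ∈ H0, e j ω ∂μ :=
        integral_mono_of_nonneg (.of_forall fun ω => by unfold fdp; positivity) hint
          (.of_forall fun ω => (hS ω).fdp_le hq H0 fun j _ => he_nonneg j ω)
    _ = q / Fintype.card ι * ∑ j ∈ H0, ∫ ω, e j ω ∂μ := by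
        rw [integral_const_mul, integral_finsetSum _ fun j _ => he_int j]
    _ ≤ q / Fintype.card ι * Fintype.card ι := by gcongr
    _ ≤ q := by
        rcases eq_or_ne (Fintype.card ι : ℝ) 0 with h | h <;> simp [h, hq.le]

end SelfConsistent

theorem ebhCountCap_le (p smax : ℕ) (E : ℕ → ℝ) (q : ℝ) :
    ebhCountCap p smax E q ≤ min smax p :=
  Finset.sup_le fun _ hj => (mem_Icc.mp (mem_filter.mp hj).1).2

theorem div_le_apply_ebhCountCap {p smax : ℕ} {E : ℕ → ℝ} {q : ℝ}
    (h : ebhCountCap p smax E q ≠ 0) :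
    (p : ℝ) / (q * ebhCountCap p smax E q) ≤ E (ebhCountCap p smax E q) := by
  set S := (Icc 1 (min smax p)).filter fun j => (p : ℝ) / (q * j) ≤ E j
  obtain ⟨j, hj, hj_eq⟩ := exists_mem_eq_sup S
    (nonempty_iff_ne_empty.mpr fun hS => h (by simp [ebhCountCap, S, hS])) id
  rw [ebhCountCap, hj_eq]
  exact (mem_filter.mp hj).2

section EBH

variable {Ω : Type*} {p smax : ℕ} {e : Fin p → Ω → ℝ} {q : ℝ} {r : Ω → ℕ → Fin p}

theorem card_ebhSelCap_le (ω : Ω) : #(ebhSelCap p smax e q r ω) ≤ smax :=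
  card_image_le.trans <| (card_range _).trans_le <|
    (ebhCountCap_le _ _ _ _).trans (min_le_left _ _)

theorem card_ebhSelCap {ω : Ω} (hrinj : ∀ i j, i < p → j < p → r ω i = r ω j → i = j) :
    #(ebhSelCap p smax e q r ω) = ebhCountCap p smax (fun j => e (r ω (j - 1)) ω) q := by
  have hlt : ∀ i ∈ (range (ebhCountCap p smax (fun j => e (r ω (j - 1)) ω) q) : Set ℕ),
      i < p := fun i hi =>
    (mem_range.mp hi).trans_le ((ebhCountCap_le _ _ _ _).trans (min_le_right _ _))
  rw [ebhSelCap, card_image_of_injOn fun i hi j hj => hrinj i j (hlt i hi) (hlt j hj),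
    card_range]

theorem isSelfConsistent_ebhSelCap {ω : Ω}
    (hrinj : ∀ i j, i < p → j < p → r ω i = r ω j → i = j)
    (hsort : ∀ i j, i ≤ j → j < p → e (r ω j) ω ≤ e (r ω i) ω) :
    IsSelfConsistent q (e · ω) (ebhSelCap p smax e q r ω) := by
  set k := ebhCountCap p smax (fun j => e (r ω (j - 1)) ω) q
  intro j hj
  obtain ⟨i, hi, rfl⟩ := mem_image.mp hj
  have hik : i < k := mem_range.mp hi
  have hkp : k ≤ p := (ebhCountCap_le _ _ _ _).trans (min_le_right _ _)
  rw [Fintype.card_fin, card_ebhSelCap hrinj]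
  calc (p : ℝ) / (q * k) ≤ e (r ω (k - 1)) ω := div_le_apply_ebhCountCap (by omega)
    _ ≤ e (r ω i) ω := hsort i (k - 1) (by omega) (by omega)

end EBH

theorem size_constrained_ebh_fdr_control_general
    {Ω : Type*} [MeasurableSpace Ω] (μ : Measure Ω)
    (p : ℕ)
    (e : Fin p → Ω → ℝ)
    (he_nonneg : ∀ j ω, 0 ≤ e j ω)
    (he_int : ∀ j, Integrable (e j) μ)
    (H0 : Finset (Fin p))
    (hsum : ∑ j ∈ H0, ∫ ω, e j ω ∂μ ≤ (p : ℝ))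
    (q : ℝ) (hq : q ∈ Set.Ioc (0 : ℝ) 1)
    (smax : ℕ)
    (r : Ω → ℕ → Fin p)
    (hrinj : ∀ ω i j, i < p → j < p → r ω i = r ω j → i = j)
    (hsort : ∀ ω i j, i ≤ j → j < p → e (r ω j) ω ≤ e (r ω i) ω) :
    (∀ ω, (ebhSelCap p smax e q r ω).card ≤ smax) ∧
      ∫ ω, ((ebhSelCap p smax e q r ω ∩ H0).card : ℝ) /
          max ((ebhSelCap p smax e q r ω).card : ℝ) 1 ∂μ ≤ q :=
  ⟨card_ebhSelCap_le, integral_fdp_le_of_isSelfConsistent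
    (fun ω => isSelfConsistent_ebhSelCap (hrinj ω) (hsort ω)) hq.1 he_nonneg he_int
    (by rwa [Fintype.card_fin])⟩

/-- Size-constrained e-BH controls FDR: if the e-values are nonnegative with
`∑_{j ∈ H0} E[e_j] ≤ p`, then the size-constrained e-BH selection `S*` at level
`q ∈ (0,1]` with cap `s_max` satisfies `|S*| ≤ s_max` and
`FDR = E[|S* ∩ H0| / max(|S*|,1)] ≤ q`. -/
theorem size_constrained_ebh_fdr_control
    {Ω : Type*} [MeasurableSpace Ω] (μ : Measure Ω) [IsProbabilityMeasure μ]
    (p : ℕ) (hp : 1 ≤ p)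
    (e : Fin p → Ω → ℝ)
    (he_nonneg : ∀ j ω, 0 ≤ e j ω)
    (he_int : ∀ j, Integrable (e j) μ)
    (H0 : Finset (Fin p))
    (hsum : ∑ j ∈ H0, ∫ ω, e j ω ∂μ ≤ (p : ℝ))
    (q : ℝ) (hq : q ∈ Set.Ioc (0 : ℝ) 1)
    (smax : ℕ) (hs1 : 1 ≤ smax) (hsp : smax ≤ p)
    (r : Ω → ℕ → Fin p)
    (hrinj : ∀ ω i j, i < p → j < p → r ω i = r ω j → i = j)
    (hsort : ∀ ω i j, i ≤ j → j < p → e (r ω j) ω ≤ e (r ω i) ω)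
    (hFDP : Integrable (fun ω =>
      ((ebhSelCap p smax e q r ω ∩ H0).card : ℝ) /
        max ((ebhSelCap p smax e q r ω).card : ℝ) 1) μ) :
    (∀ ω, (ebhSelCap p smax e q r ω).card ≤ smax) ∧
      ∫ ω, ((ebhSelCap p smax e q r ω ∩ H0).card : ℝ) /
          max ((ebhSelCap p smax e q r ω).card : ℝ) 1 ∂μ ≤ q :=
  size_constrained_ebh_fdr_control_general μ p e he_nonneg he_int H0 hsum q hq smax r hrinj hsort
end

section
/- Let Σ ∈ ℝ^{p×p} be symmetric positive definite and d ∈ ℝ^p with d_j ≥ 0, and let D = diag(d). Then the block matrix G = [[Σ, Σ − D], [Σ − D, Σ]] is positive semidefinite if and only if 2D − DΣ⁻¹D is positive semidefinite, i.e., G ⪰ 0 if and only if 2D − DΣ⁻¹D ⪰ 0. -/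
open Matrix

/-- Schur-complement characterization of the positive semidefiniteness of the
knockoff joint covariance matrix: for `Σ` symmetric positive definite and
`D = diag(d)` with `d_j ≥ 0`, the block matrix `G = [[Σ, Σ − D], [Σ − D, Σ]]`
is positive semidefinite iff `2D − D Σ⁻¹ D` is positive semidefinite. -/
theorem knockoff_gram_psd_iff
    (p : ℕ) (Sig : Matrix (Fin p) (Fin p) ℝ) (hSig : Sig.PosDef)
    (d : Fin p → ℝ) (hd : ∀ j, 0 ≤ d j) :
    (Matrix.fromBlocks Sig (Sig - Matrix.diagonal d)
        (Sig - Matrix.diagonal d) Sig).PosSemidef ↔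
      ((2 : ℝ) • Matrix.diagonal d -
        Matrix.diagonal d * Sig⁻¹ * Matrix.diagonal d).PosSemidef := by
  haveI : Invertible Sig := hSig.isUnit.invertible
  have hB : (Sig - Matrix.diagonal d)ᴴ = Sig - Matrix.diagonal d := by
    rw [conjTranspose_sub, hSig.isHermitian.eq, (Matrix.isHermitian_diagonal d).eq]
  have key := Matrix.PosDef.fromBlocks₁₁ (Sig - Matrix.diagonal d) Sig hSig
  rw [hB] at key
  rw [key]
  have hinv : Sig⁻¹ * Sig = 1 := inv_mul_of_invertible Sig
  have hinv' : Sig * Sig⁻¹ = 1 := mul_inv_of_invertible Sig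
  have : Sig - (Sig - Matrix.diagonal d) * Sig⁻¹ * (Sig - Matrix.diagonal d)
      = (2 : ℝ) • Matrix.diagonal d - Matrix.diagonal d * Sig⁻¹ * Matrix.diagonal d := by
    rw [Matrix.sub_mul, Matrix.sub_mul, Matrix.mul_sub, Matrix.mul_sub]
    rw [hinv', Matrix.mul_assoc (Matrix.diagonal d) Sig⁻¹ Sig, hinv]
    simp only [Matrix.one_mul, Matrix.mul_one, two_smul]
    abel
  rw [this]
end

section
/- In the equicorrelated Gaussian knockoff construction with correlation matrix Σ having ones on the diagonal and minimum eigenvalue λ_min, setting d_j = s for all j with s = min(1, 2λ_min) makes the joint matrix G = [[Σ, Σ − sI], [Σ − sI, Σ]] positive semidefinite. -/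
open Matrix

/-!
With `c = s / 2`,
`G = [[1, 1], [1, 1]] ⊗ (Σ - c I) + [[1, -1], [-1, 1]] ⊗ c I`.
Both Kronecker factors `[[1, ±1], [±1, 1]]` are Gram matrices of `(1, ±1)`, so each summand is a
congruence `Bᴴ M B` of a positive semidefinite `M`: `Σ - c I ⪰ 0` because `c ≤ λ_min`, and
`c I ⪰ 0` because `c ≥ 0`.
-/

namespace Matrix

theorem PosSemidef.fromBlocks_conjTranspose_mul_mul {m n R : Type*} [Fintype n] [Fintype m]
    [Ring R] [PartialOrder R] [StarRing R] {A : Matrix n n R} (hA : A.PosSemidef)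
    (B C : Matrix n m R) :
    (fromBlocks (Bᴴ * A * B) (Bᴴ * A * C) (Cᴴ * A * B) (Cᴴ * A * C)).PosSemidef := by
  simpa [conjTranspose_fromCols_eq_fromRows_conjTranspose, fromRows_mul_fromCols]
    using hA.conjTranspose_mul_mul_same (fromCols B C)

theorem posSemidef_sub_smul_one_of_forall_le {n : Type*} [Fintype n] [DecidableEq n]
    {A : Matrix n n ℝ} (hA : A.IsHermitian) {c : ℝ}
    (h : ∀ x : n → ℝ, c * (x ⬝ᵥ x) ≤ x ⬝ᵥ A *ᵥ x) : (A - c • 1).PosSemidef := by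
  refine .of_dotProduct_mulVec_nonneg (hA.sub (isHermitian_one.smul (.all c))) fun x => ?_
  simpa [sub_mulVec, smul_mulVec, dotProduct_sub] using h x

end Matrix

theorem equicorrelated_knockoff_psd_general
    (p : ℕ) (Sig : Matrix (Fin p) (Fin p) ℝ) (hSig : Sig.PosDef)
    (lam : ℝ) (hlam : 0 < lam)
    (hmin : ∀ x : Fin p → ℝ, lam * (x ⬝ᵥ x) ≤ x ⬝ᵥ Sig.mulVec x) :
    (Matrix.fromBlocks Sig (Sig - (min 1 (2 * lam)) • (1 : Matrix (Fin p) (Fin p) ℝ))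
        (Sig - (min 1 (2 * lam)) • (1 : Matrix (Fin p) (Fin p) ℝ)) Sig).PosSemidef := by
  set s := min 1 (2 * lam)
  have hc_nonneg : 0 ≤ s / 2 := by positivity
  have hc_le : s / 2 ≤ lam := by linarith [min_le_right 1 (2 * lam)]
  have hshift : (Sig - (s / 2) • 1).PosSemidef :=
    posSemidef_sub_smul_one_of_forall_le hSig.isHermitian fun x =>
      (mul_le_mul_of_nonneg_right hc_le (dotProduct_self_star_nonneg x)).trans (hmin x)
  have hsum := (hshift.fromBlocks_conjTranspose_mul_mul (1 : Matrix (Fin p) (Fin p) ℝ) 1).add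
    ((PosSemidef.one.smul hc_nonneg).fromBlocks_conjTranspose_mul_mul
      (1 : Matrix (Fin p) (Fin p) ℝ) (-1))
  convert hsum using 1
  simp only [conjTranspose_one, conjTranspose_neg, one_mul, mul_one, mul_neg, neg_mul, neg_neg,
    fromBlocks_add]
  congr 1 <;> module

/-- Equicorrelated Gaussian knockoffs: if `Σ` is symmetric positive definite with
unit diagonal and `λ_min > 0` satisfies `λ_min ‖x‖² ≤ xᵀ Σ x` for all `x`
(a minimum-eigenvalue bound), then with `s = min(1, 2 λ_min)` the joint matrix
`G = [[Σ, Σ − sI], [Σ − sI, Σ]]` is positive semidefinite. -/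
theorem equicorrelated_knockoff_psd
    (p : ℕ) (Sig : Matrix (Fin p) (Fin p) ℝ) (hSig : Sig.PosDef)
    (hdiag : ∀ i, Sig i i = 1)
    (lam : ℝ) (hlam : 0 < lam)
    (hmin : ∀ x : Fin p → ℝ, lam * (x ⬝ᵥ x) ≤ x ⬝ᵥ Sig.mulVec x) :
    (Matrix.fromBlocks Sig (Sig - (min 1 (2 * lam)) • (1 : Matrix (Fin p) (Fin p) ℝ))
        (Sig - (min 1 (2 * lam)) • (1 : Matrix (Fin p) (Fin p) ℝ)) Sig).PosSemidef :=
  equicorrelated_knockoff_psd_general p Sig hSig lam hlam hmin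
end

section
/- With K = 1 knockoff run, e-values defined by e_j = p·1{W_j ≥ τ̂}/(1 + m) where m = #{j : W_j ≤ −τ̂}, and e-BH run at level q: the e-BH procedure rejects exactly the set S = {j : W_j ≥ τ̂} whenever |S| ≥ (1+m)/q, and rejects nothing otherwise. In particular, if τ̂ is the knockoff+ threshold at level q (so that (1+m)/|S| ≤ q), the e-BH rejection set equals the knockoff+ selection set S. -/
open scoped Classical

/-- e-BH rejection count: the largest `j ∈ {1,…,p}` with `E j ≥ p/(q·j)`,
where `E j` is the `j`-th largest e-value; `0` if none exists. -/
noncomputable def ebhCount (p : ℕ) (E : ℕ → ℝ) (q : ℝ) : ℕ :=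
  ((Finset.Icc 1 p).filter (fun j => (p : ℝ) / (q * j) ≤ E j)).sup id

/-- e-BH rejection set: the indices attaining the `ebhCount` largest e-values,
with `r` a fixed ranking of the indices by decreasing e-value. -/
noncomputable def ebhSet (p : ℕ) (e : Fin p → ℝ) (r : ℕ → Fin p) (q : ℝ) :
    Finset (Fin p) :=
  (Finset.range (ebhCount p (fun j => e (r (j - 1))) q)).image r

/-!
When the sorted e-values are `p / t` in the first `n` ranks and `0` afterwards, the e-BH condition
`p / (q j) ≤ E j` fails beyond rank `n` and reads `t ≤ q j` up to it. Being monotone in `j`, it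
holds for some rank iff it holds at `n`, so e-BH rejects the top `n` indices or nothing.
-/

open Finset

section StepEValues

variable {p n : ℕ} {E : ℕ → ℝ} {q t : ℝ}

lemma mem_filter_ebh_of_step (hq : 0 < q) (ht : 0 < t) (hn : n ≤ p)
    (hE_le : ∀ j, 1 ≤ j → j ≤ n → E j = p / t) (hE_gt : ∀ j, n < j → j ≤ p → E j = 0) (j : ℕ) :
    j ∈ (Icc 1 p).filter (fun j => (p : ℝ) / (q * j) ≤ E j) ↔ 1 ≤ j ∧ j ≤ n ∧ t ≤ q * j := by
  simp only [mem_filter, mem_Icc]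
  constructor
  · rintro ⟨⟨hj1, hjp⟩, hle⟩
    have hp : (0 : ℝ) < p := by exact_mod_cast (by omega : 0 < p)
    have hqj : 0 < q * j := mul_pos hq (by exact_mod_cast hj1)
    have hjn : j ≤ n := by
      by_contra! hnj
      rw [hE_gt j hnj hjp] at hle
      exact (div_pos hp hqj).not_ge hle
    rw [hE_le j hj1 hjn, div_le_div_iff_of_pos_left hp hqj ht] at hle
    exact ⟨hj1, hjn, hle⟩
  · rintro ⟨hj1, hjn, hle⟩
    refine ⟨⟨hj1, hjn.trans hn⟩, ?_⟩
    rw [hE_le j hj1 hjn]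
    exact div_le_div_of_nonneg_left (Nat.cast_nonneg p) ht hle

lemma ebhCount_eq_of_step (hq : 0 < q) (ht : 0 < t) (hn : n ≤ p)
    (hE_le : ∀ j, 1 ≤ j → j ≤ n → E j = p / t) (hE_gt : ∀ j, n < j → j ≤ p → E j = 0) :
    ebhCount p E q = if t ≤ q * n then n else 0 := by
  have hmem := mem_filter_ebh_of_step hq ht hn hE_le hE_gt
  rw [ebhCount]
  split_ifs with h
  · have hn1 : 1 ≤ n := by
      by_contra! hn0
      rw [Nat.lt_one_iff.mp hn0, Nat.cast_zero, mul_zero] at h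
      exact ht.not_ge h
    exact le_antisymm (Finset.sup_le fun j hj => ((hmem j).1 hj).2.1)
      (Finset.le_sup (f := id) ((hmem n).2 ⟨hn1, le_rfl, h⟩))
  · refine Nat.le_zero.mp (Finset.sup_le fun j hj => ?_)
    obtain ⟨-, hjn, hj⟩ := (hmem j).1 hj
    exact absurd (hj.trans (by gcongr)) h

end StepEValues

lemma image_range_card_eq {α : Type*} [DecidableEq α] {S : Finset α} {r : ℕ → α}
    (hr : Set.InjOn r (range #S)) (hS : ∀ k < #S, r k ∈ S) : (range #S).image r = S :=
  eq_of_subset_of_card_le (image_subset_iff.mpr fun k hk => hS k (mem_range.mp hk))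
    (by rw [card_image_of_injOn hr, card_range])

lemma ebhSet_ite_mem {p : ℕ} {S : Finset (Fin p)} {r : ℕ → Fin p} {q t : ℝ}
    (hq : 0 < q) (ht : 0 < t) (hrinj : ∀ i j, i < p → j < p → r i = r j → i = j)
    (hfirst : ∀ k, k < #S → r k ∈ S) (hlast : ∀ k, #S ≤ k → k < p → r k ∉ S) :
    ebhSet p (fun j => if j ∈ S then (p : ℝ) / t else 0) r q = if t ≤ q * #S then S else ∅ := by
  have hSp : #S ≤ p := by simpa using card_le_univ S
  rw [ebhSet, ebhCount_eq_of_step hq ht hSp (fun j _ _ => if_pos (hfirst _ (by omega)))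
    (fun j _ _ => if_neg (hlast _ (by omega) (by omega)))]
  split_ifs
  · refine image_range_card_eq (fun i hi j hj => hrinj i j ?_ ?_) hfirst
    · exact (mem_range.mp hi).trans_le hSp
    · exact (mem_range.mp hj).trans_le hSp
  · exact image_empty r

theorem single_run_ebh_eq_knockoff_plus_general
    (p : ℕ) (q : ℝ) (hq : q ∈ Set.Ioc (0 : ℝ) 1)
    (W : Fin p → ℝ) (τ : ℝ)
    (S : Finset (Fin p)) (hS : S = Finset.univ.filter (fun j => τ ≤ W j))
    (m : ℕ)
    (e : Fin p → ℝ)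
    (he : e = fun j => if τ ≤ W j then (p : ℝ) / (1 + m) else 0)
    (r : ℕ → Fin p)
    (hrinj : ∀ i j, i < p → j < p → r i = r j → i = j)
    (hfirst : ∀ k, k < S.card → r k ∈ S)
    (hlast : ∀ k, S.card ≤ k → k < p → r k ∉ S) :
    (1 + (m : ℝ) ≤ q * S.card → ebhSet p e r q = S) ∧
      (¬ (1 + (m : ℝ) ≤ q * S.card) → ebhSet p e r q = ∅) := by
  have he_mem : e = fun j => if j ∈ S then (p : ℝ) / (1 + m) else 0 := by
    simp [he, hS]
  rw [he_mem, ebhSet_ite_mem hq.1 (by positivity) hrinj hfirst hlast]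
  exact ⟨fun h => if_pos h, fun h => if_neg h⟩

/-- Single-run ($K = 1$) equivalence of e-BH and the knockoff+ filter: with
e-values `e_j = p·1{W_j ≥ τ̂}/(1 + m)` where `m = #{j : W_j ≤ −τ̂}`, the e-BH
procedure at level `q` rejects exactly `S = {j : W_j ≥ τ̂}` whenever
`|S| ≥ (1 + m)/q`, and rejects nothing otherwise. In particular, when `τ̂` is
the knockoff+ threshold at level `q` (so `(1 + m)/|S| ≤ q`), the e-BH rejection
set equals the knockoff+ selection set. -/
theorem single_run_ebh_eq_knockoff_plus
    (p : ℕ) (hp : 1 ≤ p) (q : ℝ) (hq : q ∈ Set.Ioc (0 : ℝ) 1)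
    (W : Fin p → ℝ) (τ : ℝ) (hτ : 0 < τ)
    (S : Finset (Fin p)) (hS : S = Finset.univ.filter (fun j => τ ≤ W j))
    (m : ℕ) (hm : m = (Finset.univ.filter (fun j : Fin p => W j ≤ -τ)).card)
    (e : Fin p → ℝ)
    (he : e = fun j => if τ ≤ W j then (p : ℝ) / (1 + m) else 0)
    (r : ℕ → Fin p)
    (hrinj : ∀ i j, i < p → j < p → r i = r j → i = j)
    (hfirst : ∀ k, k < S.card → r k ∈ S)
    (hlast : ∀ k, S.card ≤ k → k < p → r k ∉ S) :
    (1 + (m : ℝ) ≤ q * S.card → ebhSet p e r q = S) ∧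
      (¬ (1 + (m : ℝ) ≤ q * S.card) → ebhSet p e r q = ∅) :=
  single_run_ebh_eq_knockoff_plus_general p q hq W τ S hS m e he r hrinj hfirst hlast
end
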